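/- Let T ≥ 2, let y_1,…,y_T ∈ ℝ, let γ > 0, λ ≥ 0, and let m be an integer with 1 ≤ m < T. Then the minimum, over all segmentations 0 = τ_0 < τ_1 < … < τ_k < τ_{k+1} = T of {1,…,T} with m ∉ {τ_1,…,τ_k} and all amplitudes α_0,…,α_k ≥ 0, of (1/2) Σ_{j=0}^{k} Σ_{t=τ_j+1}^{τ_{j+1}} (y_t − α_j γ^{t−τ_{j+1}})² + λk, equals min_{α ≥ 0} of the sum of: (i) the minimum over segmentations 0 = τ_0 < … < τ_{k+1} = m of {1,…,m} with amplitudes α_0,…,α_k ≥ 0 constrained so that the last amplitude α_k = α, of (1/2) Σ_{j} Σ_{t=τ_j+1}^{τ_{j+1}} (y_t − α_j γ^{t−τ_{j+1}})² + λk, plus (ii) the minimum over segmentations m = τ̃_0 < τ̃_1 < … < τ̃_{l+1} = T of {m+1,…,T} with amplitudes α̃_0,…,α̃_l ≥ 0 constrained so that the fitted value of the first segment at time m+1 equals γα (i.e. α̃_0 γ^{(m+1)−τ̃_1} = γα), of (1/2) Σ_{j} Σ_{t=τ̃_j+1}^{τ̃_{j+1}} (y_t − α̃_j γ^{t−τ̃_{j+1}})²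 + λl. In words, constraining the fitted value at time m to be α and at time m+1 to be γα is equivalent to requiring that m is not a changepoint. -/
import Mathlib


/-- Segment cost `D(a, b, α) = (1/2) ∑_{t=a+1}^{b} (y_t − α γ^{t−b})²`. -/
noncomputable def segCost (y : ℕ → ℝ) (γ : ℝ) (a b : ℕ) (α : ℝ) : ℝ :=
  (1/2) * ∑ t ∈ Finset.Icc (a+1) b, (y t - α * γ ^ ((t : ℤ) - (b : ℤ)))^2

/-- `τ` is a segmentation of the interval `{a+1,…,b}` with `k` changepoints:
`a = τ 0 < τ 1 < … < τ k < τ (k+1) = b`. -/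
def IsSeg (a b k : ℕ) (τ : ℕ → ℕ) : Prop :=
  τ 0 = a ∧ τ (k+1) = b ∧ ∀ j ≤ k, τ j < τ (j+1)

/-- Changepoint objective with per-segment amplitudes:
`∑_{j=0}^{k} D(τ_j, τ_{j+1}, α_j) + λ k`. -/
noncomputable def objAmp (y : ℕ → ℝ) (γ lam : ℝ) (k : ℕ) (τ : ℕ → ℕ) (α : ℕ → ℝ) : ℝ :=
  (∑ j ∈ Finset.range (k+1), segCost y γ (τ j) (τ (j+1)) (α j)) + lam * k

/-- `F(τ)`: the optimal cost of segmenting the first `τ` data points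
(minimum of the changepoint objective over segmentations and nonnegative
amplitudes), with the convention `F(0) = −λ`. -/
noncomputable def Fval (y : ℕ → ℝ) (γ lam : ℝ) : ℕ → ℝ
  | 0 => -lam
  | s+1 => sInf { c | ∃ (k : ℕ) (τ : ℕ → ℕ) (a : ℕ → ℝ), IsSeg 0 (s+1) k τ ∧
      (∀ j ≤ k, 0 ≤ a j) ∧ c = objAmp y γ lam k τ a }

/-- `Cost(y_{1:s}, α; γ) = min_{0 ≤ τ < s} { F(τ) + D(τ, s, α) + λ }`. -/
noncomputable def Cost (y : ℕ → ℝ) (γ lam : ℝ) (s : ℕ) (α : ℝ) : ℝ :=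
  sInf { c | ∃ τ : ℕ, τ < s ∧ c = Fval y γ lam τ + segCost y γ τ s α + lam }

/-- Optimal segment cost `min_{α ≥ 0} D(a, b, α)`. -/
noncomputable def segMin (y : ℕ → ℝ) (γ : ℝ) (a b : ℕ) : ℝ :=
  sInf { c | ∃ α : ℝ, 0 ≤ α ∧ c = segCost y γ a b α }

/-- Changepoint objective with each segment's amplitude optimized separately:
`∑_{j=0}^{k} min_{α ≥ 0} D(τ_j, τ_{j+1}, α) + λ k`. -/
noncomputable def objOpt (y : ℕ → ℝ) (γ lam : ℝ) (k : ℕ) (τ : ℕ → ℕ) : ℝ :=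
  (∑ j ∈ Finset.range (k+1), segMin y γ (τ j) (τ (j+1))) + lam * k

lemma segCost_nonneg (y : ℕ → ℝ) (γ : ℝ) (a b : ℕ) (α : ℝ) :
    0 ≤ segCost y γ a b α := by
  unfold segCost; positivity

lemma objAmp_nonneg (y : ℕ → ℝ) (γ : ℝ) {lam : ℝ} (hlam : 0 ≤ lam)
    (k : ℕ) (τ : ℕ → ℕ) (a : ℕ → ℝ) : 0 ≤ objAmp y γ lam k τ a := by
  unfold objAmp
  have h1 : 0 ≤ ∑ j ∈ Finset.range (k+1), segCost y γ (τ j) (τ (j+1)) (a j) :=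
    Finset.sum_nonneg fun j _ => segCost_nonneg y γ _ _ _
  have h2 : 0 ≤ lam * k := mul_nonneg hlam (Nat.cast_nonneg k)
  linarith

lemma segCost_split (y : ℕ → ℝ) {γ : ℝ} (hγ : 0 < γ) {p q r : ℕ}
    (hpq : p ≤ q) (hqr : q ≤ r) (β : ℝ) :
    segCost y γ p r β =
      segCost y γ p q (β * γ ^ ((q:ℤ) - (r:ℤ))) + segCost y γ q r β := by
  unfold segCost
  rw [← mul_add]
  congr 1
  rw [show Finset.Icc (p+1) r = Finset.Ioc p r from Finset.Icc_add_one_left_eq_Ioc p r,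
    show Finset.Icc (p+1) q = Finset.Ioc p q from Finset.Icc_add_one_left_eq_Ioc p q,
    show Finset.Icc (q+1) r = Finset.Ioc q r from Finset.Icc_add_one_left_eq_Ioc q r,
    ← Finset.sum_Ioc_consecutive _ hpq hqr]
  congr 1
  apply Finset.sum_congr rfl
  intro t ht
  congr 2
  rw [mul_assoc, ← zpow_add₀ hγ.ne']
  congr 1
  ring

lemma seg_strictMono {a b k : ℕ} {τ : ℕ → ℕ} (h : IsSeg a b k τ) :
    ∀ i j, i < j → j ≤ k + 1 → τ i < τ j := by
  intro i j hij hj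
  induction j with
  | zero => omega
  | succ n ih =>
    rcases Nat.lt_or_ge i n with h' | h'
    · exact lt_trans (ih h' (by omega)) (h.2.2 n (by omega))
    · have : i = n := by omega
      subst this
      exact h.2.2 i (by omega)

lemma glue_obj (y : ℕ → ℝ) {γ : ℝ} (lam : ℝ) (hγ : 0 < γ) {m T : ℕ}
    (hm1 : 1 ≤ m) (hm2 : m < T)
    {k : ℕ} {τ : ℕ → ℕ} {a : ℕ → ℝ} (hs1 : IsSeg 0 m k τ)
    {l : ℕ} {τ' : ℕ → ℕ} {a' : ℕ → ℝ} (hs2 : IsSeg m T l τ')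
    (hcomp : a' 0 * γ ^ (((m : ℤ) + 1) - (τ' 1 : ℤ)) = γ * a k) :
    ∃ σ : ℕ → ℕ, ∃ b : ℕ → ℝ, IsSeg 0 T (k + l) σ ∧
      (∀ j, 1 ≤ j → j ≤ k + l → σ j ≠ m) ∧
      (∀ j ≤ k + l, b j = if j < k then a j else a' (j - k)) ∧
      objAmp y γ lam (k + l) σ b = objAmp y γ lam k τ a + objAmp y γ lam l τ' a' := by
  set σ : ℕ → ℕ := fun j => if j ≤ k then τ j else τ' (j - k) with hσ
  set b : ℕ → ℝ := fun j => if j < k then a j else a' (j - k) with hb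
  refine ⟨σ, b, ?_, ?_, fun j _ => rfl, ?_⟩
  · refine ⟨by simp [hσ, hs1.1], ?_, ?_⟩
    · simp only [hσ]
      rw [if_neg (by omega)]
      have : k + l + 1 - k = l + 1 := by omega
      rw [this, hs2.2.1]
    · intro j hj
      simp only [hσ]
      rcases Nat.lt_or_ge j k with h' | h'
      · rw [if_pos (by omega), if_pos (by omega)]
        exact hs1.2.2 j (by omega)
      rcases Nat.eq_or_lt_of_le h' with h'' | h''
      · have hjk : j = k := h''.symm
        rw [if_pos (by omega), if_neg (by omega)]
        have h1 : τ j < m := by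
          rw [← hs1.2.1, ← hjk]; exact hs1.2.2 j (by omega)
        have h2 : m < τ' 1 := by
          have := hs2.2.2 0 (Nat.zero_le l); rwa [hs2.1] at this
        have e : j + 1 - k = 1 := by omega
        rw [e]; omega
      · rw [if_neg (by omega), if_neg (by omega)]
        have e1 : j + 1 - k = (j - k) + 1 := by omega
        rw [e1]
        exact hs2.2.2 (j - k) (by omega)
  · intro j hj1 hj2
    simp only [hσ]
    rcases Nat.lt_or_ge k j with h' | h'
    · rw [if_neg (by omega)]
      have : m < τ' (j - k) := by
        have := seg_strictMono hs2 0 (j - k) (by omega) (by omega)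
        rwa [hs2.1] at this
      omega
    · rw [if_pos h']
      have : τ j < m := by
        have := seg_strictMono hs1 j (k+1) (by omega) (by omega)
        rwa [hs1.2.1] at this
      omega
  · unfold objAmp
    have hcast : ((k + l : ℕ) : ℝ) = (k : ℝ) + (l : ℝ) := by push_cast; ring
    have key : (∑ j ∈ Finset.range (k + l + 1), segCost y γ (σ j) (σ (j+1)) (b j)) =
        (∑ j ∈ Finset.range (k+1), segCost y γ (τ j) (τ (j+1)) (a j)) +
        (∑ j ∈ Finset.range (l+1), segCost y γ (τ' j) (τ' (j+1)) (a' j)) := by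
      have hτk : τ k < m := by rw [← hs1.2.1]; exact hs1.2.2 k le_rfl
      have hτ'1 : m < τ' 1 := by
        have := hs2.2.2 0 (Nat.zero_le l); rwa [hs2.1] at this
      have hak : a' 0 * γ ^ ((m:ℤ) - (τ' 1:ℤ)) = a k := by
        have h := hcomp
        rw [show ((m:ℤ)+1) - (τ' 1 : ℤ) = 1 + ((m:ℤ) - τ' 1) from by ring,
          zpow_add₀ hγ.ne', zpow_one] at h
        have h2 : γ * (a' 0 * γ ^ ((m:ℤ) - (τ' 1:ℤ))) = γ * a k := by
          rw [← h]; ring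
        exact mul_left_cancel₀ hγ.ne' h2
      have e1 : ∀ j ∈ Finset.range k, segCost y γ (σ j) (σ (j+1)) (b j)
          = segCost y γ (τ j) (τ (j+1)) (a j) := by
        intro j hj
        simp only [Finset.mem_range] at hj
        simp only [hσ, hb]
        rw [if_pos (by omega), if_pos (by omega), if_pos (by omega)]
      have e2 : ∀ j ∈ Finset.range l,
          segCost y γ (σ (k+(j+1))) (σ (k+(j+1)+1)) (b (k+(j+1)))
          = segCost y γ (τ' (j+1)) (τ' (j+1+1)) (a' (j+1)) := by
        intro j hj
        simp only [hσ, hb]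
        rw [if_neg (by omega), if_neg (by omega), if_neg (by omega)]
        rw [show k+(j+1)-k = j+1 from by omega, show k+(j+1)+1-k = j+1+1 from by omega]
      have E0 : segCost y γ (σ (k+0)) (σ (k+0+1)) (b (k+0))
          = segCost y γ (τ k) m (a k) + segCost y γ m (τ' 1) (a' 0) := by
        simp only [hσ, hb, Nat.add_zero]
        rw [if_pos le_rfl, if_neg (by omega), if_neg (by omega)]
        rw [show k+1-k = 1 from by omega, show k-k = 0 from by omega]
        rw [segCost_split y hγ (le_of_lt hτk) (le_of_lt hτ'1) (a' 0), hak]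
      calc (∑ j ∈ Finset.range (k + l + 1), segCost y γ (σ j) (σ (j+1)) (b j))
          = (∑ j ∈ Finset.range k, segCost y γ (σ j) (σ (j+1)) (b j))
            + ∑ j ∈ Finset.range (l+1), segCost y γ (σ (k+j)) (σ (k+j+1)) (b (k+j)) := by
            rw [show k + l + 1 = k + (l+1) from by omega,
              Finset.sum_range_add (fun j => segCost y γ (σ j) (σ (j+1)) (b j)) k (l+1)]
        _ = (∑ j ∈ Finset.range k, segCost y γ (τ j) (τ (j+1)) (a j))
            + ((∑ j ∈ Finset.range l, segCost y γ (τ' (j+1)) (τ' (j+1+1)) (a' (j+1)))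
              + (segCost y γ (τ k) m (a k) + segCost y γ m (τ' 1) (a' 0))) := by
            rw [Finset.sum_congr rfl e1,
              Finset.sum_range_succ' (fun j => segCost y γ (σ (k+j)) (σ (k+j+1)) (b (k+j))) l,
              E0, Finset.sum_congr rfl e2]
        _ = (∑ j ∈ Finset.range (k+1), segCost y γ (τ j) (τ (j+1)) (a j)) +
            (∑ j ∈ Finset.range (l+1), segCost y γ (τ' j) (τ' (j+1)) (a' j)) := by
            rw [Finset.sum_range_succ (fun j => segCost y γ (τ j) (τ (j+1)) (a j)) k,
              Finset.sum_range_succ' (fun j => segCost y γ (τ' j) (τ' (j+1)) (a' j)) l,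
              hs1.2.1, hs2.1]
            ring
    rw [key, hcast]; ring

lemma split_obj (y : ℕ → ℝ) {γ : ℝ} (lam : ℝ) (hγ : 0 < γ) {m T : ℕ}
    (hm1 : 1 ≤ m) (hm2 : m < T)
    {K : ℕ} {σ : ℕ → ℕ} {b : ℕ → ℝ} (hs : IsSeg 0 T K σ)
    (hnm : ∀ j, 1 ≤ j → j ≤ K → σ j ≠ m) (hbn : ∀ j ≤ K, 0 ≤ b j) :
    ∃ α : ℝ, 0 ≤ α ∧
    ∃ (k : ℕ) (τ : ℕ → ℕ) (a : ℕ → ℝ), IsSeg 0 m k τ ∧ (∀ j ≤ k, 0 ≤ a j) ∧ a k = α ∧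
    ∃ (l : ℕ) (τ' : ℕ → ℕ) (a' : ℕ → ℝ), IsSeg m T l τ' ∧ (∀ j ≤ l, 0 ≤ a' j) ∧
      a' 0 * γ ^ (((m:ℤ)+1) - (τ' 1 : ℤ)) = γ * α ∧
      objAmp y γ lam K σ b = objAmp y γ lam k τ a + objAmp y γ lam l τ' a' := by
  -- locate the segment containing m
  have hP : ∃ n, m ≤ σ n := ⟨K+1, by rw [hs.2.1]; omega⟩
  classical
  set n0 := Nat.find hP with hn0
  have hn0P : m ≤ σ n0 := Nat.find_spec hP
  have hn0pos : 1 ≤ n0 := by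
    by_contra h
    have : n0 = 0 := by omega
    rw [this, hs.1] at hn0P; omega
  set j0 := n0 - 1 with hj0def
  have hj0lt : σ j0 < m := by
    have := Nat.find_min hP (show j0 < n0 by omega)
    omega
  have hn0eq : n0 = j0 + 1 := by omega
  have hn0le : n0 ≤ K + 1 := Nat.find_min' hP (by rw [hs.2.1]; omega)
  have hj0K : j0 ≤ K := by omega
  have hj0m : m < σ (j0 + 1) := by
    rcases Nat.lt_or_ge (j0+1) (K+1) with h | h
    · have hne := hnm (j0+1) (by omega) (by omega)
      rw [← hn0eq] at hne ⊢
      omega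
    · have : j0 + 1 = K + 1 := by omega
      rw [this, hs.2.1]; omega
  rw [← hn0eq] at hj0m
  set α : ℝ := b j0 * γ ^ ((m:ℤ) - (σ n0 : ℤ)) with hα
  have hαnn : 0 ≤ α := mul_nonneg (hbn j0 hj0K) (le_of_lt (zpow_pos hγ _))
  set τ : ℕ → ℕ := fun j => if j ≤ j0 then σ j else m with hτ
  set a : ℕ → ℝ := fun j => if j < j0 then b j else α with ha
  set l := K - j0 with hl
  set τ' : ℕ → ℕ := fun j => if j = 0 then m else σ (j0 + j) with hτ'
  set a' : ℕ → ℝ := fun j => b (j0 + j) with ha'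
  have hKeq : K = j0 + l := by omega
  refine ⟨α, hαnn, j0, τ, a, ?_, ?_, by simp [ha], l, τ', a', ?_, ?_, ?_, ?_⟩
  · refine ⟨by simp [hτ, hs.1], by simp [hτ], ?_⟩
    intro j hj
    simp only [hτ]
    rcases Nat.lt_or_ge j j0 with h | h
    · rw [if_pos (by omega), if_pos (by omega)]
      exact hs.2.2 j (by omega)
    · have : j = j0 := by omega
      subst this
      rw [if_pos le_rfl, if_neg (by omega)]
      exact hj0lt
  · intro j hj
    simp only [ha]
    split
    · exact hbn j (by omega)
    · exact hαnn
  · refine ⟨by simp [hτ'], ?_, ?_⟩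
    · simp only [hτ']
      rw [if_neg (by omega), show j0 + (l+1) = K + 1 from by omega, hs.2.1]
    · intro j hj
      simp only [hτ']
      rcases Nat.eq_or_lt_of_le (Nat.zero_le j) with h | h
      · rw [← h]
        simp only [if_pos rfl, if_neg (show ¬(0+1 = 0) by omega)]
        rw [hn0eq] at hj0m
        simpa using hj0m
      · rw [if_neg (by omega), if_neg (by omega)]
        exact hs.2.2 (j0 + j) (by omega)
  · intro j hj
    exact hbn (j0 + j) (by omega)
  · simp only [ha', hτ']
    rw [if_neg (by omega), hα, hn0eq]
    rw [show ((m:ℤ)+1) - ((σ (j0+1) : ℕ) : ℤ) = 1 + ((m:ℤ) - (σ (j0+1) : ℤ)) from by ring,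
      zpow_add₀ hγ.ne', zpow_one, Nat.add_zero]
    ring
  · unfold objAmp
    have hcast : ((K : ℕ) : ℝ) = (j0 : ℝ) + (l : ℝ) := by
      rw [hKeq]; push_cast; ring
    have key : (∑ j ∈ Finset.range (K + 1), segCost y γ (σ j) (σ (j+1)) (b j)) =
        (∑ j ∈ Finset.range (j0+1), segCost y γ (τ j) (τ (j+1)) (a j)) +
        (∑ j ∈ Finset.range (l+1), segCost y γ (τ' j) (τ' (j+1)) (a' j)) := by
      have e1 : ∀ j ∈ Finset.range j0, segCost y γ (τ j) (τ (j+1)) (a j)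
          = segCost y γ (σ j) (σ (j+1)) (b j) := by
        intro j hj
        simp only [Finset.mem_range] at hj
        simp only [hτ, ha]
        rw [if_pos (by omega), if_pos (by omega), if_pos (by omega)]
      have e2 : ∀ j ∈ Finset.range l,
          segCost y γ (τ' (j+1)) (τ' (j+1+1)) (a' (j+1))
          = segCost y γ (σ (j0+(j+1))) (σ (j0+(j+1)+1)) (b (j0+(j+1))) := by
        intro j hj
        simp only [hτ', ha']
        rw [if_neg (by omega), if_neg (by omega)]
        rw [show j0+(j+1)+1 = j0 + (j+1+1) from by omega]
      have E0 : segCost y γ (σ (j0+0)) (σ (j0+0+1)) (b (j0+0))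
          = segCost y γ (τ j0) (τ (j0+1)) (a j0) + segCost y γ (τ' 0) (τ' 1) (a' 0) := by
        have h1 : τ j0 = σ j0 := by simp [hτ]
        have h2 : τ (j0+1) = m := by simp [hτ]
        have h3 : a j0 = α := by simp [ha]
        have h4 : τ' 0 = m := by simp [hτ']
        have h5 : τ' 1 = σ (j0+1) := by simp [hτ']
        have h6 : a' 0 = b j0 := by simp [ha']
        rw [hn0eq] at hj0m hn0P
        rw [Nat.add_zero, h1, h2, h3, h4, h5, h6, hα, hn0eq]
        exact segCost_split y hγ (le_of_lt hj0lt) (le_of_lt hj0m) (b j0)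
      calc (∑ j ∈ Finset.range (K + 1), segCost y γ (σ j) (σ (j+1)) (b j))
          = (∑ j ∈ Finset.range j0, segCost y γ (σ j) (σ (j+1)) (b j))
            + ∑ j ∈ Finset.range (l+1), segCost y γ (σ (j0+j)) (σ (j0+j+1)) (b (j0+j)) := by
            rw [show K + 1 = j0 + (l+1) from by omega,
              Finset.sum_range_add (fun j => segCost y γ (σ j) (σ (j+1)) (b j)) j0 (l+1)]
        _ = (∑ j ∈ Finset.range j0, segCost y γ (σ j) (σ (j+1)) (b j))
            + ((∑ j ∈ Finset.range l, segCost y γ (σ (j0+(j+1))) (σ (j0+(j+1)+1)) (b (j0+(j+1))))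
              + (segCost y γ (τ j0) (τ (j0+1)) (a j0) + segCost y γ (τ' 0) (τ' 1) (a' 0))) := by
            rw [Finset.sum_range_succ' (fun j => segCost y γ (σ (j0+j)) (σ (j0+j+1)) (b (j0+j))) l,
              E0]
        _ = (∑ j ∈ Finset.range (j0+1), segCost y γ (τ j) (τ (j+1)) (a j)) +
            (∑ j ∈ Finset.range (l+1), segCost y γ (τ' j) (τ' (j+1)) (a' j)) := by
            rw [Finset.sum_range_succ (fun j => segCost y γ (τ j) (τ (j+1)) (a j)) j0,
              Finset.sum_range_succ' (fun j => segCost y γ (τ' j) (τ' (j+1)) (a' j)) l,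
              Finset.sum_congr rfl e1, Finset.sum_congr rfl e2]
            ring
    rw [key, hcast]; ring

/-- the minimum of the changepoint objective (with amplitudes) over
segmentations of `{1,…,T}` that do NOT have `m` as a changepoint equals
`min_{α ≥ 0}` of: the constrained minimum on `{1,…,m}` with last amplitude `α`, plus
the constrained minimum on `{m+1,…,T}` whose fitted value at time `m+1` is `γ * α`
(i.e. `α̃_0 * γ ^ ((m+1) − τ̃_1) = γ * α`). -/
theorem changepoint_no_m_eq_glued (T : ℕ) (hT : 2 ≤ T) (y : ℕ → ℝ)
    (γ lam : ℝ) (hγ : 0 < γ) (hlam : 0 ≤ lam) (m : ℕ) (hm1 : 1 ≤ m) (hm2 : m < T) :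
    sInf { c | ∃ (k : ℕ) (τ : ℕ → ℕ) (a : ℕ → ℝ), IsSeg 0 T k τ ∧
        (∀ j, 1 ≤ j → j ≤ k → τ j ≠ m) ∧ (∀ j ≤ k, 0 ≤ a j) ∧
        c = objAmp y γ lam k τ a } =
      sInf { c | ∃ α : ℝ, 0 ≤ α ∧ c =
        sInf { c1 | ∃ (k : ℕ) (τ : ℕ → ℕ) (a : ℕ → ℝ), IsSeg 0 m k τ ∧
            (∀ j ≤ k, 0 ≤ a j) ∧ a k = α ∧ c1 = objAmp y γ lam k τ a } +
        sInf { c2 | ∃ (l : ℕ) (τ : ℕ → ℕ) (a : ℕ → ℝ), IsSeg m T l τ ∧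
            (∀ j ≤ l, 0 ≤ a j) ∧ a 0 * γ ^ (((m : ℤ) + 1) - (τ 1 : ℤ)) = γ * α ∧
            c2 = objAmp y γ lam l τ a } } := by
  classical
  set A : Set ℝ := { c | ∃ (k : ℕ) (τ : ℕ → ℕ) (a : ℕ → ℝ), IsSeg 0 T k τ ∧
        (∀ j, 1 ≤ j → j ≤ k → τ j ≠ m) ∧ (∀ j ≤ k, 0 ≤ a j) ∧
        c = objAmp y γ lam k τ a } with hA
  set S1 : ℝ → Set ℝ := fun α => { c1 | ∃ (k : ℕ) (τ : ℕ → ℕ) (a : ℕ → ℝ), IsSeg 0 m k τ ∧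
            (∀ j ≤ k, 0 ≤ a j) ∧ a k = α ∧ c1 = objAmp y γ lam k τ a } with hS1
  set S2 : ℝ → Set ℝ := fun α => { c2 | ∃ (l : ℕ) (τ : ℕ → ℕ) (a : ℕ → ℝ), IsSeg m T l τ ∧
            (∀ j ≤ l, 0 ≤ a j) ∧ a 0 * γ ^ (((m : ℤ) + 1) - (τ 1 : ℤ)) = γ * α ∧
            c2 = objAmp y γ lam l τ a } with hS2
  set B : Set ℝ := { c | ∃ α : ℝ, 0 ≤ α ∧ c = sInf (S1 α) + sInf (S2 α) } with hB
  show sInf A = sInf B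
  -- basic facts
  have hAnn : ∀ c ∈ A, (0:ℝ) ≤ c := by
    rintro c ⟨k, τ, a, _, _, _, rfl⟩
    exact objAmp_nonneg y γ hlam k τ a
  have hS1nn : ∀ α, ∀ c ∈ S1 α, (0:ℝ) ≤ c := by
    rintro α c ⟨k, τ, a, _, _, _, rfl⟩
    exact objAmp_nonneg y γ hlam k τ a
  have hS2nn : ∀ α, ∀ c ∈ S2 α, (0:ℝ) ≤ c := by
    rintro α c ⟨l, τ, a, _, _, _, rfl⟩
    exact objAmp_nonneg y γ hlam l τ a
  have hAbdd : BddBelow A := ⟨0, hAnn⟩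
  have hS1bdd : ∀ α, BddBelow (S1 α) := fun α => ⟨0, hS1nn α⟩
  have hS2bdd : ∀ α, BddBelow (S2 α) := fun α => ⟨0, hS2nn α⟩
  have hAne : A.Nonempty := by
    refine ⟨objAmp y γ lam 0 (fun j => if j = 0 then 0 else T) (fun _ => 0),
      0, (fun j => if j = 0 then 0 else T), (fun _ => 0), ⟨rfl, rfl, ?_⟩,
      by omega, fun _ _ => le_rfl, rfl⟩
    intro j hj
    interval_cases j
    simp; omega
  have hS1ne : ∀ α : ℝ, 0 ≤ α → (S1 α).Nonempty := by
    intro α hα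
    refine ⟨objAmp y γ lam 0 (fun j => if j = 0 then 0 else m) (fun _ => α),
      0, (fun j => if j = 0 then 0 else m), (fun _ => α), ⟨rfl, rfl, ?_⟩,
      fun _ _ => hα, rfl, rfl⟩
    intro j hj
    interval_cases j
    simp; omega
  have hS2ne : ∀ α : ℝ, 0 ≤ α → (S2 α).Nonempty := by
    intro α hα
    refine ⟨objAmp y γ lam 0 (fun j => if j = 0 then m else T)
        (fun _ => α * γ ^ ((T:ℤ) - (m:ℤ))),
      0, (fun j => if j = 0 then m else T), (fun _ => α * γ ^ ((T:ℤ) - (m:ℤ))),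
      ⟨rfl, rfl, ?_⟩, fun _ _ => mul_nonneg hα (le_of_lt (zpow_pos hγ _)), ?_, rfl⟩
    · intro j hj
      interval_cases j
      simp; omega
    · simp only [if_neg (show ¬(1 = 0) by omega)]
      rw [mul_assoc, ← zpow_add₀ hγ.ne']
      rw [show ((T:ℤ) - (m:ℤ)) + (((m:ℤ)+1) - (T:ℤ)) = 1 from by ring, zpow_one]
      ring
  have hBne : B.Nonempty := ⟨_, 0, le_rfl, rfl⟩
  -- gluing: elements of S1 α and S2 α combine to an element of A
  have hglue : ∀ α : ℝ, 0 ≤ α → ∀ x ∈ S1 α, ∀ z ∈ S2 α, x + z ∈ A := by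
    rintro α hα x ⟨k, τ, a, hs1, hann, hak, rfl⟩ z ⟨l, τ', a', hs2, ha'nn, hcomp, rfl⟩
    obtain ⟨σ, b, hseg, hnm, hbform, hval⟩ :=
      glue_obj y lam hγ hm1 hm2 (a := a) (a' := a') hs1 hs2 (by rw [hak]; exact hcomp)
    refine ⟨k + l, σ, b, hseg, hnm, ?_, hval.symm⟩
    intro j hj
    rw [hbform j hj]
    split
    · exact hann j (by omega)
    · exact ha'nn (j - k) (by omega)
  apply le_antisymm
  · -- sInf A ≤ sInf B
    apply le_csInf hBne
    rintro c ⟨α, hα, rfl⟩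
    have h1 : ∀ x ∈ S1 α, sInf A - x ≤ sInf (S2 α) := by
      intro x hx
      apply le_csInf (hS2ne α hα)
      intro z hz
      have := csInf_le hAbdd (hglue α hα x hx z hz)
      linarith
    have h2 : sInf A - sInf (S2 α) ≤ sInf (S1 α) := by
      apply le_csInf (hS1ne α hα)
      intro x hx
      have := h1 x hx
      linarith
    linarith
  · -- sInf B ≤ sInf A
    apply le_csInf hAne
    rintro c ⟨K, σ, b, hseg, hnm, hbn, rfl⟩
    obtain ⟨α, hα, k, τ, a, hs1, hann, hak, l, τ', a', hs2, ha'nn, hcomp, hval⟩ :=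
      split_obj y lam hγ hm1 hm2 hseg hnm hbn
    have hc1 : objAmp y γ lam k τ a ∈ S1 α := ⟨k, τ, a, hs1, hann, hak, rfl⟩
    have hc2 : objAmp y γ lam l τ' a' ∈ S2 α := ⟨l, τ', a', hs2, ha'nn, hcomp, rfl⟩
    have hBmem : sInf (S1 α) + sInf (S2 α) ∈ B := ⟨α, hα, rfl⟩
    have hBlb : BddBelow B := by
      refine ⟨0, ?_⟩
      rintro c ⟨β, hβ, rfl⟩
      have g1 : (0:ℝ) ≤ sInf (S1 β) := Real.sInf_nonneg (hS1nn β)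
      have g2 : (0:ℝ) ≤ sInf (S2 β) := Real.sInf_nonneg (hS2nn β)
      linarith
    have k1 := csInf_le (hS1bdd α) hc1
    have k2 := csInf_le (hS2bdd α) hc2
    have k3 := csInf_le hBlb hBmem
    rw [hval]
    linarith
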